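/- If k ∈ L²([0,1)×[0,1)) satisfies the Lipschitz condition |k(x₁,y₁) − k(x₂,y₂)| ≤ L(|x₁−x₂| + |y₁−y₂|), then the two-dimensional Walsh approximation k_m(x,y) = Σ_{i,j=0}^{m−1} c_{ij} w_i(x) w_j(y), c_{ij} = ∫₀¹∫₀¹ k(s,t) w_i(s) w_j(t) dt ds, m = 2^k, h = 1/m, satisfies (∫₀¹∫₀¹ |k − k_m|² dx dy)^{1/2} ≤ √2 L h, i.e. ‖e_m‖₂ = O(h). -/

import Mathlib

open MeasureTheory Real

/-- The Rademacher functions. -/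
noncomputable def rademacher (i : ℕ) (t : ℝ) : ℝ :=
  if i = 0 then 1 else Real.sign (Real.sin (2 ^ i * Real.pi * t))

/-- The Walsh functions. -/
noncomputable def walsh (n : ℕ) (t : ℝ) : ℝ :=
  ∏ k ∈ Finset.range n.size, if n.testBit k then rademacher (k + 1) t else 1

lemma measurable_rademacher (i : ℕ) : Measurable (rademacher i) := by
  unfold rademacher
  split
  · exact measurable_const
  · have hf : Measurable fun t : ℝ => Real.sin (2 ^ i * Real.pi * t) :=
      (Real.continuous_sin.comp (continuous_const.mul continuous_id)).measurable
    have hs : Measurable Real.sign := by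
      unfold Real.sign
      exact Measurable.ite (measurableSet_lt measurable_id measurable_const) measurable_const
        (Measurable.ite (measurableSet_lt measurable_const measurable_id) measurable_const
          measurable_const)
    exact hs.comp hf

lemma abs_rademacher_le_one (i : ℕ) (t : ℝ) : |rademacher i t| ≤ 1 := by
  unfold rademacher
  split
  · simp
  · rcases lt_trichotomy (Real.sin (2 ^ i * Real.pi * t)) 0 with h | h | h
    · rw [Real.sign_of_neg h]; simp
    · rw [h, Real.sign_zero]; simp
    · rw [Real.sign_of_pos h]; simp

lemma measurable_walsh (n : ℕ) : Measurable (walsh n) := by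
  unfold walsh
  exact Finset.measurable_prod _ fun k _ => by
    split
    · exact measurable_rademacher _
    · exact measurable_const

lemma abs_walsh_le_one (n : ℕ) (t : ℝ) : |walsh n t| ≤ 1 := by
  unfold walsh
  rw [Finset.abs_prod]
  refine Finset.prod_le_one (fun k _ => abs_nonneg _) (fun k _ => ?_)
  split
  · exact abs_rademacher_le_one _ _
  · simp

lemma walsh_eq_prod_range (n N : ℕ) (hn : n < 2 ^ N) (t : ℝ) :
    walsh n t = ∏ k ∈ Finset.range N, if n.testBit k then rademacher (k + 1) t else 1 := by
  unfold walsh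
  refine Finset.prod_subset ?_ ?_
  · exact Finset.range_subset_range.2 (Nat.size_le.2 hn)
  · intro k _ hk
    simp only [Finset.mem_range, not_lt] at hk
    rw [Nat.testBit_lt_two_pow (lt_of_lt_of_le (Nat.lt_size_self n) (Nat.pow_le_pow_right (by norm_num) hk))]; simp

lemma walsh_zero (t : ℝ) : walsh 0 t = 1 := by
  unfold walsh; simp [Nat.size_zero]

lemma walsh_two_pow_add (k n : ℕ) (hn : n < 2 ^ k) (t : ℝ) :
    walsh (2 ^ k + n) t = rademacher (k + 1) t * walsh n t := by
  have h1 : 2 ^ k + n < 2 ^ (k + 1) := by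
    rw [pow_succ]; omega
  rw [walsh_eq_prod_range (2 ^ k + n) (k+1) h1 t, walsh_eq_prod_range n k hn t,
    Finset.prod_range_succ]
  have hbit : (2 ^ k + n).testBit k = true := by
    rw [Nat.testBit_two_pow_add_eq, Nat.testBit_lt_two_pow hn]; rfl
  rw [hbit, if_pos rfl, mul_comm]
  congr 1
  refine Finset.prod_congr rfl (fun j hj => ?_)
  rw [Nat.testBit_two_pow_add_gt (Finset.mem_range.1 hj)]

lemma rademacher_eq_zpow (i : ℕ) (hi : i ≠ 0) (t : ℝ) (ht : Irrational t) :
    rademacher i t = (-1 : ℝ) ^ ⌊(2:ℝ) ^ i * t⌋ := by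
  have hirr : Irrational ((2:ℝ) ^ i * t) := by
    have := ht.natCast_mul (m := 2 ^ i) (by positivity)
    rwa [Nat.cast_pow, Nat.cast_ofNat] at this
  set u : ℝ := (2:ℝ) ^ i * t with hu
  set n : ℤ := ⌊u⌋ with hn
  have hlt : (n : ℝ) < u := by
    rcases lt_or_eq_of_le (Int.floor_le u) with h | h
    · exact h
    · exact absurd h.symm (hirr.ne_int n)
  have hlt2 : u < n + 1 := Int.lt_floor_add_one u
  have harg : (2:ℝ) ^ i * Real.pi * t = Real.pi * (u - n) + n * Real.pi := by
    push_cast; ring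
  unfold rademacher
  rw [if_neg hi, harg, Real.sin_add_int_mul_pi]
  have hpos : 0 < Real.sin (Real.pi * (u - n)) := by
    apply Real.sin_pos_of_pos_of_lt_pi
    · have : (0:ℝ) < u - n := by linarith
      positivity
    · nlinarith [Real.pi_pos]
  rcases Int.even_or_odd n with he | ho
  · rw [he.neg_one_zpow, one_mul, Real.sign_of_pos hpos]
  · rw [ho.neg_one_zpow, neg_one_mul, Real.sign_of_neg (by linarith)]

lemma floor_two_mul_mem (u : ℝ) (a : ℤ) (ha : ⌊u⌋ = a) :
    ⌊2 * u⌋ = 2 * a ∨ ⌊2 * u⌋ = 2 * a + 1 := by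
  have h1 : (a : ℝ) ≤ u := ha ▸ Int.floor_le u
  have h2 : u < a + 1 := ha ▸ Int.lt_floor_add_one u
  have l1 : (2 * a : ℤ) ≤ ⌊2 * u⌋ := Int.le_floor.2 (by push_cast; linarith)
  have l2 : ⌊2 * u⌋ < 2 * a + 2 := by
    have h3 : (⌊2 * u⌋ : ℝ) < 2 * a + 2 := by linarith [Int.floor_le (2 * u)]
    exact_mod_cast h3
  omega

lemma dirichlet_kernel (k : ℕ) (x s : ℝ) (hx : x ∈ Set.Ico (0:ℝ) 1)
    (hs : s ∈ Set.Ico (0:ℝ) 1) (hxI : Irrational x) (hsI : Irrational s) :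
    ∑ n ∈ Finset.range (2 ^ k), walsh n x * walsh n s
      = if ⌊(2:ℝ) ^ k * x⌋ = ⌊(2:ℝ) ^ k * s⌋ then ((2:ℝ) ^ k) else 0 := by
  induction k with
  | zero =>
      simp only [pow_zero, one_mul, Finset.range_one, Finset.sum_singleton, walsh_zero]
      have e1 : ⌊x⌋ = 0 := Int.floor_eq_zero_iff.2 (by exact_mod_cast hx)
      have e2 : ⌊s⌋ = 0 := Int.floor_eq_zero_iff.2 (by exact_mod_cast hs)
      rw [if_pos (by rw [e1, e2])]
  | succ k ih =>
      have hsplit : ∑ n ∈ Finset.range (2 ^ (k+1)), walsh n x * walsh n s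
          = (∑ n ∈ Finset.range (2 ^ k), walsh n x * walsh n s)
            * (1 + rademacher (k+1) x * rademacher (k+1) s) := by
        have h2 : 2 ^ (k+1) = 2 ^ k + 2 ^ k := by rw [pow_succ]; omega
        rw [h2, Finset.sum_range_add]
        rw [mul_add, mul_one]
        congr 1
        rw [Finset.sum_mul]
        refine Finset.sum_congr rfl (fun n hn => ?_)
        rw [walsh_two_pow_add k n (Finset.mem_range.1 hn),
            walsh_two_pow_add k n (Finset.mem_range.1 hn)]
        ring
      rw [hsplit, ih]
      have hfx : ⌊(2:ℝ)^(k+1) * x⌋ = ⌊2 * ((2:ℝ)^k * x)⌋ := by ring_nf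
      have hfs : ⌊(2:ℝ)^(k+1) * s⌋ = ⌊2 * ((2:ℝ)^k * s)⌋ := by ring_nf
      set a : ℤ := ⌊(2:ℝ)^k * x⌋
      set b : ℤ := ⌊(2:ℝ)^k * s⌋
      set p : ℤ := ⌊(2:ℝ)^(k+1) * x⌋
      set q : ℤ := ⌊(2:ℝ)^(k+1) * s⌋
      have hpx : p = 2*a ∨ p = 2*a + 1 := by
        rw [show p = ⌊2 * ((2:ℝ)^k * x)⌋ from hfx]; exact floor_two_mul_mem _ a rfl
      have hqs : q = 2*b ∨ q = 2*b + 1 := by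
        rw [show q = ⌊2 * ((2:ℝ)^k * s)⌋ from hfs]; exact floor_two_mul_mem _ b rfl
      have hrx : rademacher (k+1) x = (-1 : ℝ) ^ p := rademacher_eq_zpow (k+1) k.succ_ne_zero x hxI
      have hry : rademacher (k+1) s = (-1 : ℝ) ^ q := rademacher_eq_zpow (k+1) k.succ_ne_zero s hsI
      rw [hrx, hry]
      by_cases hab : a = b
      · rw [if_pos hab]
        by_cases hpq : p = q
        · rw [if_pos hpq, hpq, ← zpow_add₀ (by norm_num : (-1:ℝ) ≠ 0)]
          rw [Even.neg_one_zpow ⟨q, by ring⟩]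
          ring
        · rw [if_neg hpq, ← zpow_add₀ (by norm_num : (-1:ℝ) ≠ 0)]
          have hodd : Odd (p + q) := by
            rcases hpx with h1 | h1 <;> rcases hqs with h2 | h2 <;> [skip; skip; skip; skip] <;>
              first
                | (exfalso; omega)
                | (exact ⟨2*a + 2*b, by omega⟩)
                | (refine ⟨a + b, by omega⟩)
          rw [hodd.neg_one_zpow]
          ring
      · rw [if_neg hab, if_neg (by omega : ¬ p = q)]
        ring

lemma ae_irrational : ∀ᵐ x : ℝ, Irrational x := by
  rw [ae_iff]
  refine measure_mono_null (fun x hx => ?_) ((Set.countable_range ((↑) : ℚ → ℝ)).measure_zero _)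
  simpa [Irrational] using hx

lemma integral_abs_sub (c d x : ℝ) (h1 : c ≤ x) (h2 : x ≤ d) :
    ∫ s in Set.Ico c d, |x - s| = ((x - c) ^ 2 + (d - x) ^ 2) / 2 := by
  rw [setIntegral_congr_set Ico_ae_eq_Ioc,
      ← intervalIntegral.integral_of_le (le_trans h1 h2)]
  have hint : ∀ a b : ℝ, IntervalIntegrable (fun s => |x - s|) volume a b :=
    fun a b => (continuous_const.sub continuous_id).abs.intervalIntegrable a b
  rw [← intervalIntegral.integral_add_adjacent_intervals (hint c x) (hint x d)]
  have e1 : ∫ s in c..x, |x - s| = (x - c) ^ 2 / 2 := by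
    rw [intervalIntegral.integral_congr (g := fun s => x - s) ?_]
    · rw [intervalIntegral.integral_sub (intervalIntegrable_const (c := x))
        intervalIntegral.intervalIntegrable_id, intervalIntegral.integral_const,
        integral_id]
      ring_nf
    · intro s hs
      rw [Set.uIcc_of_le h1] at hs
      show |x - s| = x - s
      exact abs_of_nonneg (by linarith [hs.2])
  have e2 : ∫ s in x..d, |x - s| = (d - x) ^ 2 / 2 := by
    rw [intervalIntegral.integral_congr (g := fun s => s - x) ?_]
    · rw [intervalIntegral.integral_sub intervalIntegral.intervalIntegrable_id
        (intervalIntegrable_const (c := x)), intervalIntegral.integral_const,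
        integral_id]
      ring_nf
    · intro s hs
      rw [Set.uIcc_of_le h2] at hs
      show |x - s| = s - x
      rw [abs_sub_comm]
      exact abs_of_nonneg (by linarith [hs.1])
  rw [e1, e2]; ring

lemma integrableOn_mul_bdd {f g : ℝ → ℝ} {C : ℝ}
    (hf : ContinuousOn f (Set.Ico (0:ℝ) 1)) (hfb : ∀ t ∈ Set.Ico (0:ℝ) 1, |f t| ≤ C)
    (hg : Measurable g) (hgb : ∀ t, |g t| ≤ 1) :
    IntegrableOn (fun t => f t * g t) (Set.Ico (0:ℝ) 1) := by
  have hmeas : AEStronglyMeasurable (fun t => f t * g t)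
      (volume.restrict (Set.Ico (0:ℝ) 1)) :=
    ((hf.aemeasurable measurableSet_Ico).mul hg.aemeasurable).aestronglyMeasurable
  refine Integrable.mono' (integrable_const C) hmeas ?_
  refine (ae_restrict_iff' measurableSet_Ico).2 (Filter.Eventually.of_forall fun t ht => ?_)
  have h1 := hfb t ht
  have h2 := hgb t
  have h0 : (0:ℝ) ≤ |f t| := abs_nonneg _
  calc ‖f t * g t‖ = |f t| * |g t| := by rw [Real.norm_eq_abs, abs_mul]
    _ ≤ C * 1 := mul_le_mul h1 h2 (abs_nonneg _) (le_trans h0 h1)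
    _ = C := mul_one C

lemma mem_Ico_iff_floor (m : ℕ) (hm0 : 0 < m) (h : ℝ) (hh : h = 1 / m) (A : ℤ) (t : ℝ) :
    t ∈ Set.Ico ((A:ℝ) * h) (((A:ℝ) + 1) * h) ↔ ⌊(m:ℝ) * t⌋ = A := by
  have hmR : (0:ℝ) < m := by exact_mod_cast hm0
  have hmh : (m:ℝ) * h = 1 := by rw [hh]; field_simp
  have hhp : 0 < h := by rw [hh]; positivity
  have e1 : (m:ℝ) * ((A:ℝ) * h) = A := by
    rw [show (m:ℝ) * ((A:ℝ) * h) = (A:ℝ) * ((m:ℝ) * h) from by ring, hmh, mul_one]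
  have e2 : (m:ℝ) * (((A:ℝ) + 1) * h) = (A:ℝ) + 1 := by
    rw [show (m:ℝ) * (((A:ℝ) + 1) * h) = ((A:ℝ) + 1) * ((m:ℝ) * h) from by ring, hmh, mul_one]
  rw [Set.mem_Ico, Int.floor_eq_iff]
  constructor
  · rintro ⟨h1, h2⟩
    have k1 := mul_le_mul_of_nonneg_left h1 hmR.le
    have k2 := mul_lt_mul_of_pos_left h2 hmR
    constructor
    · linarith
    · push_cast
      linarith
  · rintro ⟨h1, h2⟩
    push_cast at h2
    have e3 : h * ((m:ℝ) * t) = t := by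
      rw [show h * ((m:ℝ) * t) = ((m:ℝ) * h) * t from by ring, hmh, one_mul]
    have k1 := mul_le_mul_of_nonneg_left h1 hhp.le
    have k2 := mul_lt_mul_of_pos_left h2 hhp
    constructor
    · linarith
    · linarith

lemma Ico_subset_unit (m : ℕ) (hm0 : 0 < m) (h : ℝ) (hh : h = 1 / m) (A : ℤ)
    (h0 : 0 ≤ A) (hA : A < m) :
    Set.Ico ((A:ℝ) * h) (((A:ℝ) + 1) * h) ⊆ Set.Ico (0:ℝ) 1 := by
  have hmR : (0:ℝ) < m := by exact_mod_cast hm0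
  have hmh : (m:ℝ) * h = 1 := by rw [hh]; field_simp
  have hhp : 0 < h := by rw [hh]; positivity
  have hA0 : (0:ℝ) ≤ A := by exact_mod_cast h0
  have hAm : (A:ℝ) + 1 ≤ m := by
    have : (A:ℝ) < m := by exact_mod_cast hA
    have : A + 1 ≤ (m:ℤ) := by exact_mod_cast hA
    exact_mod_cast this
  rintro t ⟨h1, h2⟩
  constructor
  · nlinarith
  · nlinarith

lemma integral_mul_dirichlet (k m : ℕ) (hm : m = 2 ^ k) (h : ℝ) (hh : h = 1 / m)
    (y : ℝ) (hy : y ∈ Set.Ico (0:ℝ) 1) (hyI : Irrational y)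
    (g : ℝ → ℝ) (hg : IntegrableOn g (Set.Ico (0:ℝ) 1)) :
    ∫ t in Set.Ico (0:ℝ) 1, g t * (∑ j ∈ Finset.range m, walsh j y * walsh j t)
      = m * ∫ t in Set.Ico ((⌊(m:ℝ) * y⌋ : ℝ) * h) ((⌊(m:ℝ) * y⌋ + 1 : ℝ) * h), g t := by
  have hm0 : 0 < m := by rw [hm]; positivity
  have hmR : (0:ℝ) < m := by exact_mod_cast hm0
  set b : ℤ := ⌊(m:ℝ) * y⌋ with hb
  have hb0 : 0 ≤ b := Int.le_floor.2 (by push_cast; nlinarith [hy.1])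
  have hbm : b < m := Int.floor_lt.2 (by push_cast; nlinarith [hy.2])
  set Iy := Set.Ico ((b:ℝ) * h) (((b:ℝ) + 1) * h) with hIy
  have hsub : Iy ⊆ Set.Ico (0:ℝ) 1 := Ico_subset_unit m hm0 h hh b hb0 hbm
  have hyb : ⌊(m:ℝ) * y⌋ = b := rfl
  have step1 : ∫ t in Set.Ico (0:ℝ) 1,
        g t * (∑ j ∈ Finset.range m, walsh j y * walsh j t)
      = ∫ t in Set.Ico (0:ℝ) 1, Iy.indicator (fun t => (m:ℝ) * g t) t := by
    refine setIntegral_congr_ae measurableSet_Ico ?_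
    filter_upwards [ae_irrational] with t htI ht
    have hD := dirichlet_kernel k y t hy ht hyI htI
    have hcast : ((2:ℝ) ^ k) = (m : ℝ) := by rw [hm]; push_cast; ring
    rw [hcast] at hD
    rw [← hm] at hD
    rw [hD]
    by_cases hmem : t ∈ Iy
    · have : ⌊(m:ℝ) * t⌋ = b := (mem_Ico_iff_floor m hm0 h hh b t).1 hmem
      rw [if_pos (by rw [this]), Set.indicator_of_mem hmem]
      ring
    · have : ¬ ⌊(m:ℝ) * t⌋ = b := fun hc => hmem ((mem_Ico_iff_floor m hm0 h hh b t).2 hc)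
      rw [if_neg (fun hc => this hc.symm), Set.indicator_of_notMem hmem]
      ring
  rw [step1, integral_indicator measurableSet_Ico, Measure.restrict_restrict measurableSet_Ico,
    Set.inter_eq_self_of_subset_left hsub, integral_const_mul]

lemma half_sq_bound (u v h : ℝ) (h1 : 0 ≤ u) (h3 : 0 ≤ v) (h2 : u + v = h) :
    (u ^ 2 + v ^ 2) / 2 ≤ h ^ 2 / 2 := by nlinarith

lemma key_bound (K : ℝ → ℝ → ℝ) (L : ℝ) (hL : 0 ≤ L)
    (hK : ∀ x₁ ∈ Set.Ico (0:ℝ) 1, ∀ y₁ ∈ Set.Ico (0:ℝ) 1,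
      ∀ x₂ ∈ Set.Ico (0:ℝ) 1, ∀ y₂ ∈ Set.Ico (0:ℝ) 1,
        |K x₁ y₁ - K x₂ y₂| ≤ L * (|x₁ - x₂| + |y₁ - y₂|))
    (k m : ℕ) (hm : m = 2 ^ k) (h : ℝ) (hh : h = 1 / m)
    (c : ℕ → ℕ → ℝ)
    (hc : ∀ i j, c i j =
      ∫ s in Set.Ico (0:ℝ) 1, ∫ t in Set.Ico (0:ℝ) 1, K s t * walsh i s * walsh j t)
    (x y : ℝ) (hx : x ∈ Set.Ico (0:ℝ) 1) (hy : y ∈ Set.Ico (0:ℝ) 1)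
    (hxI : Irrational x) (hyI : Irrational y) :
    |K x y - ∑ i ∈ Finset.range m, ∑ j ∈ Finset.range m,
      c i j * walsh i x * walsh j y| ≤ L * h := by
  have hm0 : 0 < m := by rw [hm]; positivity
  have hmR : (0:ℝ) < m := by exact_mod_cast hm0
  have hmh : (m:ℝ) * h = 1 := by rw [hh]; field_simp
  have hhp : 0 < h := by rw [hh]; positivity
  set I01 : Set ℝ := Set.Ico (0:ℝ) 1 with hI01
  have h0mem : (0:ℝ) ∈ I01 := by constructor <;> norm_num
  set C : ℝ := |K 0 0| + 2 * L with hC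
  -- boundedness of K on the square
  have hKb : ∀ s ∈ I01, ∀ t ∈ I01, |K s t| ≤ C := by
    intro s hs t ht
    have h1 := hK s hs t ht 0 h0mem 0 h0mem
    have hs1 : |s - 0| ≤ 1 := by
      rw [sub_zero, abs_of_nonneg hs.1]; exact hs.2.le
    have ht1 : |t - 0| ≤ 1 := by
      rw [sub_zero, abs_of_nonneg ht.1]; exact ht.2.le
    have h2 : L * (|s - 0| + |t - 0|) ≤ L * 2 :=
      mul_le_mul_of_nonneg_left (by linarith) hL
    calc |K s t| = |(K s t - K 0 0) + K 0 0| := by ring_nf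
      _ ≤ |K s t - K 0 0| + |K 0 0| := abs_add_le _ _
      _ ≤ C := by rw [hC]; linarith
  -- continuity of sections
  have hKcont : ∀ s ∈ I01, ContinuousOn (fun t => K s t) I01 := by
    intro s hs
    refine LipschitzOnWith.continuousOn (K := L.toNNReal) ?_
    rw [lipschitzOnWith_iff_dist_le_mul]
    intro t1 ht1 t2 ht2
    rw [Real.dist_eq, Real.dist_eq, Real.coe_toNNReal L hL]
    have := hK s hs t1 ht1 s hs t2 ht2
    simpa using this
  have hKint : ∀ s ∈ I01, IntegrableOn (fun t => K s t) I01 := by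
    intro s hs
    have := integrableOn_mul_bdd (g := fun _ => (1:ℝ)) (hKcont s hs)
      (fun t ht => hKb s hs t ht) measurable_const (by intro t; norm_num)
    simpa using this
  -- generic bound for integrals over Ico
  have habs_int : ∀ (f : ℝ → ℝ) (D u v : ℝ), u ≤ v →
      (∀ t ∈ Set.Ico u v, ‖f t‖ ≤ D) → |∫ t in Set.Ico u v, f t| ≤ D * (v - u) := by
    intro f D u v huv hfb
    have hb : ∀ᵐ t ∂(volume.restrict (Set.Ico u v)), ‖f t‖ ≤ D :=
      (ae_restrict_iff' measurableSet_Ico).2 (Filter.Eventually.of_forall hfb)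
    have := norm_integral_le_of_norm_le (integrable_const D) hb
    rwa [integral_const, measureReal_def, Measure.restrict_apply_univ, Real.volume_Ico,
      ENNReal.toReal_ofReal (by linarith), smul_eq_mul, Real.norm_eq_abs, mul_comm] at this
  -- the functions B j
  set B : ℕ → ℝ → ℝ := fun j s => ∫ t in I01, K s t * walsh j t with hB
  have hwint : ∀ (j : ℕ) (s : ℝ), s ∈ I01 →
      IntegrableOn (fun t => K s t * walsh j t) I01 :=
    fun j s hs => integrableOn_mul_bdd (hKcont s hs)
      (fun t ht => hKb s hs t ht) (measurable_walsh j) (abs_walsh_le_one j)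
  have hBdiff : ∀ j, ∀ s1 ∈ I01, ∀ s2 ∈ I01, |B j s1 - B j s2| ≤ L * |s1 - s2| := by
    intro j s1 hs1 s2 hs2
    have heq : B j s1 - B j s2
        = ∫ t in I01, (K s1 t * walsh j t - K s2 t * walsh j t) :=
      (integral_sub (hwint j s1 hs1) (hwint j s2 hs2)).symm
    rw [heq]
    have := habs_int (fun t => K s1 t * walsh j t - K s2 t * walsh j t)
      (L * |s1 - s2|) 0 1 zero_le_one ?_
    · simpa using this
    · intro t ht
      have h1 := hK s1 hs1 t ht s2 hs2 t ht
      simp only [sub_self, abs_zero, add_zero] at h1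
      have h2 := abs_walsh_le_one j t
      show ‖K s1 t * walsh j t - K s2 t * walsh j t‖ ≤ L * |s1 - s2|
      have e : K s1 t * walsh j t - K s2 t * walsh j t
          = (K s1 t - K s2 t) * walsh j t := by ring
      rw [Real.norm_eq_abs, e, abs_mul]
      calc |K s1 t - K s2 t| * |walsh j t| ≤ (L * |s1 - s2|) * 1 :=
            mul_le_mul h1 h2 (abs_nonneg _) (le_trans (abs_nonneg _) h1)
        _ = L * |s1 - s2| := mul_one _
  have hBb : ∀ j, ∀ s ∈ I01, |B j s| ≤ C := by
    intro j s hs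
    have := habs_int (fun t => K s t * walsh j t) C 0 1 zero_le_one ?_
    · simpa using this
    · intro t ht
      show ‖K s t * walsh j t‖ ≤ C
      rw [Real.norm_eq_abs, abs_mul]
      have h1 := hKb s hs t ht
      have h2 := abs_walsh_le_one j t
      calc |K s t| * |walsh j t| ≤ C * 1 :=
            mul_le_mul h1 h2 (abs_nonneg _) (le_trans (abs_nonneg _) h1)
        _ = C := mul_one _
  have hBcont : ∀ j, ContinuousOn (B j) I01 := by
    intro j
    refine LipschitzOnWith.continuousOn (K := L.toNNReal) ?_
    rw [lipschitzOnWith_iff_dist_le_mul]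
    intro s1 hs1 s2 hs2
    rw [Real.dist_eq, Real.dist_eq, Real.coe_toNNReal L hL]
    exact hBdiff j s1 hs1 s2 hs2
  -- the intervals
  set a : ℤ := ⌊(m:ℝ) * x⌋ with ha
  set b : ℤ := ⌊(m:ℝ) * y⌋ with hbdef
  have ha0 : 0 ≤ a := Int.le_floor.2 (by push_cast; nlinarith [hx.1])
  have ham : a < m := Int.floor_lt.2 (by push_cast; nlinarith [hx.2])
  have hb0 : 0 ≤ b := Int.le_floor.2 (by push_cast; nlinarith [hy.1])
  have hbm : b < m := Int.floor_lt.2 (by push_cast; nlinarith [hy.2])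
  set Ix := Set.Ico ((a:ℝ) * h) (((a:ℝ) + 1) * h) with hIx
  set Iy := Set.Ico ((b:ℝ) * h) (((b:ℝ) + 1) * h) with hIyd
  have hsubx : Ix ⊆ I01 := Ico_subset_unit m hm0 h hh a ha0 ham
  have hsuby : Iy ⊆ I01 := Ico_subset_unit m hm0 h hh b hb0 hbm
  have hxmem : x ∈ Ix := (mem_Ico_iff_floor m hm0 h hh a x).2 rfl
  have hymem : y ∈ Iy := (mem_Ico_iff_floor m hm0 h hh b y).2 rfl
  -- the function T
  set T : ℝ → ℝ := fun s => ∑ j ∈ Finset.range m, walsh j y * B j s with hTdef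
  have hTcont : ContinuousOn T I01 :=
    continuousOn_finset_sum _ fun j _ => continuousOn_const.mul (hBcont j)
  have hTb : ∀ s ∈ I01, |T s| ≤ m * C := by
    intro s hs
    calc |T s| ≤ ∑ j ∈ Finset.range m, |walsh j y * B j s| :=
          Finset.abs_sum_le_sum_abs _ _
      _ ≤ ∑ _j ∈ Finset.range m, C := by
          refine Finset.sum_le_sum fun j _ => ?_
          rw [abs_mul]
          have h1 := abs_walsh_le_one j y
          have h2 := hBb j s hs
          calc |walsh j y| * |B j s| ≤ 1 * C :=
                mul_le_mul h1 h2 (abs_nonneg _) zero_le_one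
            _ = C := one_mul _
      _ = m * C := by rw [Finset.sum_const, Finset.card_range, nsmul_eq_mul]
  have hTint : IntegrableOn T I01 := by
    have := integrableOn_mul_bdd (g := fun _ => (1:ℝ)) hTcont hTb
      measurable_const (by intro t; norm_num)
    simpa using this
  -- T s = m * ∫_{Iy} K s t
  have hT : ∀ s ∈ I01, T s = m * ∫ t in Iy, K s t := by
    intro s hs
    have e1 : T s = ∫ t in I01, K s t * (∑ j ∈ Finset.range m, walsh j y * walsh j t) := by
      have e2 : (fun t => K s t * (∑ j ∈ Finset.range m, walsh j y * walsh j t))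
          = fun t => ∑ j ∈ Finset.range m, walsh j y * (K s t * walsh j t) := by
        funext t
        rw [Finset.mul_sum]
        refine Finset.sum_congr rfl fun j _ => by ring
      rw [e2, integral_finset_sum]
      · refine Finset.sum_congr rfl fun j _ => ?_
        rw [integral_const_mul]
      · intro j _
        exact (hwint j s hs).const_mul _
    rw [e1, integral_mul_dirichlet k m hm h hh y hy hyI _ (hKint s hs)]
  -- the sum equals m * ∫_{Ix} T
  have hcB : ∀ i j, c i j = ∫ s in I01, B j s * walsh i s := by
    intro i j
    rw [hc i j]
    refine setIntegral_congr_fun measurableSet_Ico (fun s hs => ?_)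
    have e2 : (fun t => K s t * walsh i s * walsh j t)
        = fun t => walsh i s * (K s t * walsh j t) := by
      funext t; ring
    show (∫ t in Set.Ico (0:ℝ) 1, K s t * walsh i s * walsh j t) = B j s * walsh i s
    rw [e2, integral_const_mul, mul_comm]
  have hS : (∑ i ∈ Finset.range m, ∑ j ∈ Finset.range m,
        c i j * walsh i x * walsh j y)
      = ∫ s in I01, T s * (∑ i ∈ Finset.range m, walsh i x * walsh i s) := by
    have e3 : (fun s => T s * (∑ i ∈ Finset.range m, walsh i x * walsh i s))
        = fun s => ∑ j ∈ Finset.range m, ∑ i ∈ Finset.range m,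
            (walsh j y * B j s) * (walsh i x * walsh i s) := by
      funext s
      rw [hTdef]
      exact Finset.sum_mul_sum _ _ _ _
    rw [e3, integral_finset_sum]
    · have e4 : ∀ j ∈ Finset.range m,
          (∫ s in I01, ∑ i ∈ Finset.range m,
            (walsh j y * B j s) * (walsh i x * walsh i s))
          = ∑ i ∈ Finset.range m, (walsh j y * walsh i x) * (∫ s in I01, B j s * walsh i s) := by
        intro j _
        rw [integral_finset_sum]
        · refine Finset.sum_congr rfl fun i _ => ?_
          have e5 : (fun s => (walsh j y * B j s) * (walsh i x * walsh i s))
              = fun s => (walsh j y * walsh i x) * (B j s * walsh i s) := by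
            funext s; ring
          rw [e5, integral_const_mul]
        · intro i _
          refine ((integrableOn_mul_bdd (hBcont j) (hBb j) (measurable_walsh i)
            (abs_walsh_le_one i)).const_mul (walsh j y * walsh i x)).congr ?_
          exact Filter.Eventually.of_forall fun s => by ring
      rw [Finset.sum_congr rfl e4, Finset.sum_comm]
      refine Finset.sum_congr rfl fun i _ => Finset.sum_congr rfl fun j _ => ?_
      rw [hcB j i]
      ring
    · intro j _
      refine integrable_finset_sum _ fun i _ => ?_
      refine ((integrableOn_mul_bdd (hBcont j) (hBb j) (measurable_walsh i)
        (abs_walsh_le_one i)).const_mul (walsh j y * walsh i x)).congr ?_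
      exact Filter.Eventually.of_forall fun s => by ring
  rw [hS, integral_mul_dirichlet k m hm h hh x hx hxI T hTint]
  -- now the analytic estimate
  set φ : ℝ → ℝ := fun s => (m:ℝ) * ∫ t in Iy, K s t with hφ
  have hTφ : Set.EqOn T φ Ix := fun s hs => hT s (hsubx hs)
  rw [show (∫ t in Set.Ico ((⌊(m:ℝ)*x⌋:ℝ) * h) ((⌊(m:ℝ)*x⌋ + 1:ℝ) * h), T t)
      = ∫ s in Ix, φ s from setIntegral_congr_fun measurableSet_Ico hTφ]
  -- volume facts
  have hvolIy : (volume Iy).toReal = h := by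
    rw [hIyd, Real.volume_Ico, ENNReal.toReal_ofReal (by nlinarith)]
    ring
  have hvolIx : (volume Ix).toReal = h := by
    rw [hIx, Real.volume_Ico, ENNReal.toReal_ofReal (by nlinarith)]
    ring
  set Ay : ℝ := ((y - (b:ℝ)*h)^2 + (((b:ℝ)+1)*h - y)^2) / 2 with hAy
  set γ : ℝ := (m:ℝ) * Ay with hγ
  have hγle : γ ≤ h / 2 := by
    have hu1 : (b:ℝ) * h ≤ y := hymem.1
    have hu2 : y < ((b:ℝ)+1) * h := hymem.2
    have hAyb : Ay ≤ h^2 / 2 := by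
      rw [hAy]
      exact half_sq_bound _ _ _ (by linarith) (by linarith) (by ring)
    have h1 : (m:ℝ) * Ay ≤ (m:ℝ) * (h^2/2) := mul_le_mul_of_nonneg_left hAyb hmR.le
    have h2 : (m:ℝ) * (h^2/2) = h/2 := by linear_combination (h/2) * hmh
    rw [hγ]; linarith
  have hγ0 : 0 ≤ γ := by rw [hγ, hAy]; positivity
  -- integrability of the comparison functions
  have hconty : Continuous (fun t : ℝ => L * |y - t|) :=
    continuous_const.mul (continuous_const.sub continuous_id').abs
  have hinty : IntegrableOn (fun t : ℝ => L * |y - t|) Iy :=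
    (hconty.integrableOn_Icc).mono_set Set.Ico_subset_Icc_self
  have hcontx : Continuous (fun s : ℝ => L * |x - s|) :=
    continuous_const.mul (continuous_const.sub continuous_id').abs
  have hintx : IntegrableOn (fun s : ℝ => L * |x - s|) Ix :=
    (hcontx.integrableOn_Icc).mono_set Set.Ico_subset_Icc_self
  -- pointwise bound on K x y - φ s
  have hptwise : ∀ s ∈ I01, |K x y - φ s| ≤ L * |x - s| + L * γ := by
    intro s hs
    have hKyint : IntegrableOn (fun t => K s t) Iy := (hKint s hs).mono_set hsuby
    have e6 : ∫ t in Iy, (K x y - K s t) = K x y * h - ∫ t in Iy, K s t := by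
      rw [integral_sub (integrable_const _) hKyint, setIntegral_const, measureReal_def, hvolIy, smul_eq_mul,
        mul_comm]
    have hφs : φ s = (m:ℝ) * ∫ t in Iy, K s t := rfl
    have e7 : K x y - φ s = m * ∫ t in Iy, (K x y - K s t) := by
      rw [e6, hφs]
      linear_combination (-(K x y)) * hmh
    rw [e7, abs_mul, abs_of_pos hmR]
    have e8 : |∫ t in Iy, (K x y - K s t)| ≤ L * |x - s| * h + L * Ay := by
      have hbnd : ∀ t ∈ Iy, ‖K x y - K s t‖ ≤ L * |x - s| + L * |y - t| := by
        intro t ht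
        have h1 := hK x hx y hy s hs t (hsuby ht)
        rw [Real.norm_eq_abs]
        linarith [mul_add L |x - s| |y - t|, h1]
      have hb2 : ∀ᵐ t ∂(volume.restrict Iy), ‖K x y - K s t‖ ≤ L * |x - s| + L * |y - t| :=
        (ae_restrict_iff' measurableSet_Ico).2 (Filter.Eventually.of_forall hbnd)
      have hgsum : IntegrableOn (fun t : ℝ => L * |x - s| + L * |y - t|) Iy :=
        (integrable_const _).add hinty
      have h9 := norm_integral_le_of_norm_le hgsum hb2
      rw [Real.norm_eq_abs] at h9
      refine le_trans h9 (le_of_eq ?_)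
      rw [integral_add (integrable_const _) hinty, setIntegral_const, measureReal_def, hvolIy,
        integral_const_mul, integral_abs_sub _ _ _ hymem.1 hymem.2.le, smul_eq_mul, hAy]
      ring
    calc (m:ℝ) * |∫ t in Iy, (K x y - K s t)|
        ≤ (m:ℝ) * (L * |x - s| * h + L * Ay) := mul_le_mul_of_nonneg_left e8 hmR.le
      _ = L * |x - s| + L * γ := by rw [hγ]; linear_combination (L * |x - s|) * hmh
  -- φ is integrable on Ix
  have hφdiff : ∀ s1 ∈ I01, ∀ s2 ∈ I01, |φ s1 - φ s2| ≤ L * |s1 - s2| := by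
    intro s1 hs1 s2 hs2
    have heq : φ s1 - φ s2 = m * ∫ t in Iy, (K s1 t - K s2 t) := by
      show ((m:ℝ) * ∫ t in Iy, K s1 t) - ((m:ℝ) * ∫ t in Iy, K s2 t)
          = (m:ℝ) * ∫ t in Iy, (K s1 t - K s2 t)
      rw [integral_sub ((hKint s1 hs1).mono_set hsuby) ((hKint s2 hs2).mono_set hsuby)]
      ring
    rw [heq, abs_mul, abs_of_pos hmR]
    have h10 : |∫ t in Iy, (K s1 t - K s2 t)|
        ≤ (L * |s1 - s2|) * ((((b:ℝ)+1)*h) - ((b:ℝ)*h)) := by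
      refine habs_int _ _ _ _ (by nlinarith) ?_
      intro t ht
      have h1 := hK s1 hs1 t (hsuby ht) s2 hs2 t (hsuby ht)
      simp only [sub_self, abs_zero, add_zero] at h1
      rw [Real.norm_eq_abs]
      exact h1
    have h11 : ((((b:ℝ)+1)*h) - ((b:ℝ)*h)) = h := by ring
    rw [h11] at h10
    calc (m:ℝ) * |∫ t in Iy, (K s1 t - K s2 t)| ≤ (m:ℝ) * (L * |s1 - s2| * h) :=
          mul_le_mul_of_nonneg_left h10 hmR.le
      _ = L * |s1 - s2| := by linear_combination (L * |s1 - s2|) * hmh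
  have hφb : ∀ s ∈ I01, |φ s| ≤ (m:ℝ) * (C * h) := by
    intro s hs
    have hφs : φ s = (m:ℝ) * ∫ t in Iy, K s t := rfl
    rw [hφs, abs_mul, abs_of_pos hmR]
    refine mul_le_mul_of_nonneg_left ?_ hmR.le
    have h12 := habs_int (fun t => K s t) C ((b:ℝ)*h) (((b:ℝ)+1)*h) (by nlinarith) ?_
    · have h11 : ((((b:ℝ)+1)*h) - ((b:ℝ)*h)) = h := by ring
      rw [h11] at h12
      linarith [h12]
    · intro t ht
      rw [Real.norm_eq_abs]
      exact hKb s hs t (hsuby ht)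
  have hφcont : ContinuousOn φ I01 := by
    refine LipschitzOnWith.continuousOn (K := L.toNNReal) ?_
    rw [lipschitzOnWith_iff_dist_le_mul]
    intro s1 hs1 s2 hs2
    rw [Real.dist_eq, Real.dist_eq, Real.coe_toNNReal L hL]
    exact hφdiff s1 hs1 s2 hs2
  have hφint : IntegrableOn φ Ix := by
    refine IntegrableOn.mono_set ?_ hsubx
    have := integrableOn_mul_bdd (g := fun _ => (1:ℝ)) hφcont hφb
      measurable_const (by intro t; norm_num)
    simpa using this
  -- final computation
  have e12 : ∫ s in Ix, (K x y - φ s) = K x y * h - ∫ s in Ix, φ s := by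
    rw [integral_sub (integrable_const _) hφint, setIntegral_const, measureReal_def, hvolIx, smul_eq_mul,
      mul_comm]
  have e13 : K x y - (m:ℝ) * ∫ s in Ix, φ s = m * ∫ s in Ix, (K x y - φ s) := by
    rw [e12]
    linear_combination (-(K x y)) * hmh
  rw [e13, abs_mul, abs_of_pos hmR]
  set Axv : ℝ := ((x - (a:ℝ)*h)^2 + (((a:ℝ)+1)*h - x)^2) / 2 with hAxv
  have e14 : |∫ s in Ix, (K x y - φ s)| ≤ L * Axv + (L * γ) * h := by
    have hbnd : ∀ s ∈ Ix, ‖K x y - φ s‖ ≤ L * |x - s| + L * γ := by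
      intro s hs
      rw [Real.norm_eq_abs]
      exact hptwise s (hsubx hs)
    have hb2 : ∀ᵐ s ∂(volume.restrict Ix), ‖K x y - φ s‖ ≤ L * |x - s| + L * γ :=
      (ae_restrict_iff' measurableSet_Ico).2 (Filter.Eventually.of_forall hbnd)
    have hgsum : IntegrableOn (fun s : ℝ => L * |x - s| + L * γ) Ix :=
      hintx.add (integrable_const _)
    have h9 := norm_integral_le_of_norm_le hgsum hb2
    rw [Real.norm_eq_abs] at h9
    refine le_trans h9 (le_of_eq ?_)
    rw [integral_add hintx (integrable_const _), setIntegral_const, measureReal_def, hvolIx,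
      integral_const_mul, integral_abs_sub _ _ _ hxmem.1 hxmem.2.le, smul_eq_mul, hAxv]
    ring
  have hAxb : (m:ℝ) * Axv ≤ h / 2 := by
    have hu1 : (a:ℝ) * h ≤ x := hxmem.1
    have hu2 : x < ((a:ℝ)+1) * h := hxmem.2
    have hu1' : (a:ℝ) * h ≤ x := hxmem.1
    have hu2' : x < ((a:ℝ)+1) * h := hxmem.2
    have hA2 : Axv ≤ h^2 / 2 := by
      rw [hAxv]
      exact half_sq_bound _ _ _ (by linarith) (by linarith) (by ring)
    have h1 : (m:ℝ) * Axv ≤ (m:ℝ) * (h^2/2) := mul_le_mul_of_nonneg_left hA2 hmR.le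
    have h2 : (m:ℝ) * (h^2/2) = h/2 := by linear_combination (h/2) * hmh
    linarith
  calc (m:ℝ) * |∫ s in Ix, (K x y - φ s)|
      ≤ (m:ℝ) * (L * Axv + (L * γ) * h) := mul_le_mul_of_nonneg_left e14 hmR.le
    _ = L * ((m:ℝ) * Axv) + (L * γ) * ((m:ℝ) * h) := by ring
    _ = L * ((m:ℝ) * Axv) + L * γ := by rw [hmh, mul_one]
    _ ≤ L * (h/2) + L * (h/2) := by
        have t1 := mul_le_mul_of_nonneg_left hAxb hL
        have t2 := mul_le_mul_of_nonneg_left hγle hL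
        linarith
    _ = L * h := by ring

theorem walsh_2d_approx_error_lipschitz (K : ℝ → ℝ → ℝ) (L : ℝ)
    (hK : ∀ x₁ ∈ Set.Ico (0:ℝ) 1, ∀ y₁ ∈ Set.Ico (0:ℝ) 1,
      ∀ x₂ ∈ Set.Ico (0:ℝ) 1, ∀ y₂ ∈ Set.Ico (0:ℝ) 1,
        |K x₁ y₁ - K x₂ y₂| ≤ L * (|x₁ - x₂| + |y₁ - y₂|))
    (k m : ℕ) (hm : m = 2 ^ k) (h : ℝ) (hh : h = 1 / m)
    (c : ℕ → ℕ → ℝ)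
    (hc : ∀ i j, c i j =
      ∫ s in Set.Ico (0:ℝ) 1, ∫ t in Set.Ico (0:ℝ) 1, K s t * walsh i s * walsh j t) :
    Real.sqrt (∫ x in Set.Ico (0:ℝ) 1, ∫ y in Set.Ico (0:ℝ) 1,
        (K x y - ∑ i ∈ Finset.range m, ∑ j ∈ Finset.range m,
          c i j * walsh i x * walsh j y) ^ 2) ≤ Real.sqrt 2 * L * h := by
  have h0mem : (0:ℝ) ∈ Set.Ico (0:ℝ) 1 := by constructor <;> norm_num
  have hhalf : (1/2:ℝ) ∈ Set.Ico (0:ℝ) 1 := by constructor <;> norm_num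
  have hL : 0 ≤ L := by
    have h1 := hK 0 h0mem 0 h0mem (1/2) hhalf 0 h0mem
    have e : |(0:ℝ) - 1/2| + |(0:ℝ) - 0| = 1/2 := by norm_num
    rw [e] at h1
    nlinarith [abs_nonneg (K 0 0 - K (1/2) 0)]
  have hm0 : 0 < m := by rw [hm]; positivity
  have hh0 : 0 ≤ h := by rw [hh]; positivity
  have hae : ∀ᵐ x ∂(volume.restrict (Set.Ico (0:ℝ) 1)),
      (∫ y in Set.Ico (0:ℝ) 1, (K x y - ∑ i ∈ Finset.range m, ∑ j ∈ Finset.range m,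
        c i j * walsh i x * walsh j y) ^ 2) ≤ (L*h)^2 := by
    filter_upwards [ae_restrict_of_ae ae_irrational, ae_restrict_mem measurableSet_Ico]
      with x hxI hx
    by_cases hint : Integrable (fun y => (K x y - ∑ i ∈ Finset.range m,
        ∑ j ∈ Finset.range m, c i j * walsh i x * walsh j y) ^ 2)
        (volume.restrict (Set.Ico (0:ℝ) 1))
    · have hmono : (fun y => (K x y - ∑ i ∈ Finset.range m, ∑ j ∈ Finset.range m,
          c i j * walsh i x * walsh j y) ^ 2) ≤ᵐ[volume.restrict (Set.Ico (0:ℝ) 1)]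
          (fun _ => (L*h)^2) := by
        filter_upwards [ae_restrict_of_ae ae_irrational, ae_restrict_mem measurableSet_Ico]
          with y hyI hy
        have hb := key_bound K L hL hK k m hm h hh c hc x y hx hy hxI hyI
        have h2 := abs_le.1 hb
        exact sq_le_sq' h2.1 h2.2
      have h3 := integral_mono_ae hint (integrable_const _) hmono
      calc (∫ y in Set.Ico (0:ℝ) 1, (K x y - ∑ i ∈ Finset.range m, ∑ j ∈ Finset.range m,
            c i j * walsh i x * walsh j y) ^ 2)
          ≤ ∫ _y in Set.Ico (0:ℝ) 1, (L*h)^2 := h3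
        _ = (L*h)^2 := by
            rw [setIntegral_const, measureReal_def, Real.volume_Ico]
            norm_num
    · rw [integral_undef hint]
      positivity
  have houter : (∫ x in Set.Ico (0:ℝ) 1, ∫ y in Set.Ico (0:ℝ) 1,
      (K x y - ∑ i ∈ Finset.range m, ∑ j ∈ Finset.range m,
        c i j * walsh i x * walsh j y) ^ 2) ≤ (L*h)^2 := by
    by_cases hint : Integrable (fun x => ∫ y in Set.Ico (0:ℝ) 1,
        (K x y - ∑ i ∈ Finset.range m, ∑ j ∈ Finset.range m,
          c i j * walsh i x * walsh j y) ^ 2) (volume.restrict (Set.Ico (0:ℝ) 1))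
    · have h3 := integral_mono_ae hint (integrable_const _) hae
      calc _ ≤ ∫ _x in Set.Ico (0:ℝ) 1, (L*h)^2 := h3
        _ = (L*h)^2 := by
            rw [setIntegral_const, measureReal_def, Real.volume_Ico]
            norm_num
    · rw [integral_undef hint]
      positivity
  have hsqrt := Real.sqrt_le_sqrt houter
  rw [Real.sqrt_sq (by positivity : 0 ≤ L * h)] at hsqrt
  have h2 : (1:ℝ) ≤ Real.sqrt 2 := by
    rw [show (1:ℝ) = Real.sqrt 1 from Real.sqrt_one.symm]
    exact Real.sqrt_le_sqrt (by norm_num)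
  calc Real.sqrt (∫ x in Set.Ico (0:ℝ) 1, ∫ y in Set.Ico (0:ℝ) 1,
      (K x y - ∑ i ∈ Finset.range m, ∑ j ∈ Finset.range m,
        c i j * walsh i x * walsh j y) ^ 2) ≤ L * h := hsqrt
    _ = 1 * (L * h) := (one_mul _).symm
    _ ≤ Real.sqrt 2 * (L * h) := mul_le_mul_of_nonneg_right h2 (by positivity)
    _ = Real.sqrt 2 * L * h := by ring
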